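/- arXiv:2311.15140 — 4 statements merged into one kernel-verified Lean document; each statement's English description precedes it below -/
import Mathlib

section
/- Let α, β ∈ ℂ and let c : ℂ → ℝ be the real cubic form c(z) = (1/6)·Re(αz³ + 3βz²z̄). Then c has a pair of orthogonal root directions, i.e. there exists z ∈ ℂ with z ≠ 0 such that c(z) = 0 and c(iz) = 0, if and only if 3|β| = |α|. -/
/-- The real cubic form `c(z) = (1/6)·Re(αz³ + 3βz²z̄)` associated to an umbilic. -/
noncomputable def cubicForm (α β : ℂ) (z : ℂ) : ℝ :=
  (1 / 6 : ℝ) * (α * z ^ 3 + 3 * β * z ^ 2 * (starRingEnd ℂ z)).re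

open Complex

lemma aux_rw (α β z : ℂ) :
    α * (Complex.I * z) ^ 3 + 3 * β * (Complex.I * z) ^ 2 * (starRingEnd ℂ (Complex.I * z))
      = -Complex.I * (α * z ^ 3) + Complex.I * (3 * β * z ^ 2 * (starRingEnd ℂ z)) := by
  simp only [map_mul, Complex.conj_I]
  linear_combination (α * z ^ 3 - 3 * β * z ^ 2 * (starRingEnd ℂ z)) * Complex.I * Complex.I_sq

lemma aux_of_key (α β z : ℂ)
    (h : α * z ^ 3 + 3 * (starRingEnd ℂ β) * (starRingEnd ℂ z) ^ 2 * z = 0) :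
    cubicForm α β z = 0 ∧ cubicForm α β (Complex.I * z) = 0 := by
  have hA : α * z ^ 3 = -(starRingEnd ℂ) (3 * β * z ^ 2 * (starRingEnd ℂ z)) := by
    simp only [map_mul, map_pow, Complex.conj_conj, map_ofNat]
    linear_combination h
  constructor
  · simp only [cubicForm, hA, Complex.add_re, Complex.neg_re, Complex.conj_re]
    ring
  · simp only [cubicForm, aux_rw, hA]
    simp only [Complex.add_re, Complex.mul_re, Complex.neg_re, Complex.neg_im,
      Complex.I_re, Complex.I_im, Complex.conj_re, Complex.conj_im]
    ring

lemma aux_key (α β z : ℂ) (h1 : cubicForm α β z = 0) (h2 : cubicForm α β (Complex.I * z) = 0) :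
    α * z ^ 3 + 3 * (starRingEnd ℂ β) * (starRingEnd ℂ z) ^ 2 * z = 0 := by
  have h1' : (α * z ^ 3).re + (3 * β * z ^ 2 * (starRingEnd ℂ z)).re = 0 := by
    simp only [cubicForm, Complex.add_re] at h1; linarith
  have h2' : (α * z ^ 3).im - (3 * β * z ^ 2 * (starRingEnd ℂ z)).im = 0 := by
    simp only [cubicForm, aux_rw, Complex.add_re, Complex.mul_re, Complex.neg_re,
      Complex.neg_im, Complex.I_re, Complex.I_im] at h2
    linarith
  have hk : α * z ^ 3 + (starRingEnd ℂ) (3 * β * z ^ 2 * (starRingEnd ℂ z)) = 0 := by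
    apply Complex.ext
    · simp only [Complex.add_re, Complex.conj_re, Complex.zero_re]; linarith
    · simp only [Complex.add_im, Complex.conj_im, Complex.zero_im]; linarith
  calc α * z ^ 3 + 3 * (starRingEnd ℂ β) * (starRingEnd ℂ z) ^ 2 * z
      = α * z ^ 3 + (starRingEnd ℂ) (3 * β * z ^ 2 * (starRingEnd ℂ z)) := by
        simp only [map_mul, map_pow, Complex.conj_conj, map_ofNat]
    _ = 0 := hk

/-- The cubic form `c` has a pair of orthogonal root directions (a nonzero `z` with
`c(z) = 0` and `c(iz) = 0`) if and only if `3|β| = |α|`. -/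
theorem stmt1 (α β : ℂ) :
    (∃ z : ℂ, z ≠ 0 ∧ cubicForm α β z = 0 ∧ cubicForm α β (Complex.I * z) = 0) ↔
      3 * ‖β‖ = ‖α‖ := by
  constructor
  · rintro ⟨z, hz, h1, h2⟩
    have hk := aux_key α β z h1 h2
    have habs : ‖α * z ^ 3‖ = ‖3 * (starRingEnd ℂ β) * (starRingEnd ℂ z) ^ 2 * z‖ := by
      rw [show α * z ^ 3 = -(3 * (starRingEnd ℂ β) * (starRingEnd ℂ z) ^ 2 * z) from by linear_combination hk]
      simp
    simp only [norm_mul, norm_pow, Complex.norm_conj, Complex.norm_ofNat] at habs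
    have hz3 : ‖z‖ ^ 3 ≠ 0 := pow_ne_zero 3 (norm_ne_zero_iff.mpr hz)
    have habs2 : (3 * ‖β‖) * ‖z‖ ^ 3 = ‖α‖ * ‖z‖ ^ 3 := by
      linear_combination -habs
    exact mul_right_cancel₀ hz3 habs2
  · intro h
    by_cases hα : α = 0
    · have hβ : β = 0 := by simpa [hα] using h
      exact ⟨1, one_ne_zero, by simp [cubicForm, hα, hβ], by simp [cubicForm, hα, hβ]⟩
    · set w : ℂ := -3 * (starRingEnd ℂ β) / α with hw
      set z : ℂ := w ^ ((4 : ℂ)⁻¹) with hzdef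
      have hβ : β ≠ 0 := by
        intro hb
        simp [hb] at h
        exact hα (norm_eq_zero.mp h.symm)
      have hwne : w ≠ 0 := by
        simp [hw, hα]
        simpa using hβ
      have hz4 : z ^ 4 = w := by
        have := Complex.cpow_nat_inv_pow w (n := 4) (by norm_num)
        simpa [hzdef] using this
      have hzne : z ≠ 0 := by
        intro h0
        apply hwne
        rw [← hz4, h0]
        norm_num
      have habsw : ‖w‖ = 1 := by
        rw [hw, norm_div, norm_mul, Complex.norm_conj]
        have h3 : ‖(-3 : ℂ)‖ = 3 := by
          rw [norm_neg]
          simp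
        rw [h3, h]
        exact div_self (norm_ne_zero_iff.mpr hα)
      have habsz : ‖z‖ = 1 := by
        have h14 : ‖z‖ ^ 4 = 1 ^ 4 := by
          rw [← norm_pow, hz4, habsw]; norm_num
        exact (pow_left_strictMonoOn₀ (by norm_num : (4:ℕ) ≠ 0)).injOn
          (norm_nonneg z) (by norm_num) h14
      have hc : (starRingEnd ℂ) z * z = 1 := by
        rw [mul_comm, Complex.mul_conj]
        norm_cast
        rw [Complex.normSq_eq_norm_sq, habsz]
        norm_num
      have h4 : α * z ^ 4 = -3 * (starRingEnd ℂ β) := by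
        rw [hz4, hw]
        field_simp
      refine ⟨z, hzne, aux_of_key α β z ?_⟩
      have h0 : (α * z ^ 3 + 3 * (starRingEnd ℂ β) * (starRingEnd ℂ z) ^ 2 * z) * z = 0 := by
        linear_combination h4 + 3 * (starRingEnd ℂ β) * ((starRingEnd ℂ) z * z + 1) * hc
      rcases mul_eq_zero.mp h0 with h' | h'
      · exact h'
      · exact absurd h' hzne
end

section
/- Let α, β ∈ ℂ. If there exists ζ ∈ ℂ with ζ ≠ 0 such that αζ³ − βζ² − β̄ζ + ᾱ = 0 and αζ³ − 3βζ² + 3β̄ζ − ᾱ = 0, then |α|⁴ − 3|β|⁴ − 6|α|²|β|² + 4(αβ̄³ + ᾱβ³) = 0. -/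
/-- If the two cubics `αζ³ − βζ² − β̄ζ + ᾱ` and `αζ³ − 3βζ² + 3β̄ζ − ᾱ` have a common
nonzero root, then `|α|⁴ − 3|β|⁴ − 6|α|²|β|² + 4(αβ̄³ + ᾱβ³) = 0` (vanishing of the
resultant). -/
theorem stmt14 (α β : ℂ)
    (h : ∃ ζ : ℂ, ζ ≠ 0 ∧
      α * ζ ^ 3 - β * ζ ^ 2 - (starRingEnd ℂ β) * ζ + (starRingEnd ℂ α) = 0 ∧
      α * ζ ^ 3 - 3 * β * ζ ^ 2 + 3 * (starRingEnd ℂ β) * ζ - (starRingEnd ℂ α) = 0) :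
    ‖α‖ ^ 4 - 3 * ‖β‖ ^ 4 -
      6 * ‖α‖ ^ 2 * ‖β‖ ^ 2 +
      4 * (α * (starRingEnd ℂ β) ^ 3 + (starRingEnd ℂ α) * β ^ 3).re = 0 := by
  obtain ⟨ζ, hz, h1, h2⟩ := h
  set a := α
  set b := β
  set a1 := (starRingEnd ℂ) α with ha1
  set b1 := (starRingEnd ℂ) β with hb1
  by_cases hα : α = 0
  · -- then the equations force β = 0
    have ha0 : a1 = 0 := by rw [ha1, hα, map_zero]
    have hb0 : b1 * ζ = 0 := by
      linear_combination (h2 - 3 * h1) / 6 + (ζ^3 / 3) * hα + (2/3) * ha0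
    have hb1z : b1 = 0 := by
      rcases mul_eq_zero.mp hb0 with h | h
      · exact h
      · exact absurd h hz
    have hb : β = 0 := by
      have := congrArg (starRingEnd ℂ) hb1z
      simpa [hb1] using this
    subst hα; subst hb
    simp only [show a = (0:ℂ) from rfl, show b = (0:ℂ) from rfl, ha0, hb1z]
    simp
  · have ha1ne : a1 ≠ 0 := by
      simp [ha1, Complex.ext_iff] at hα ⊢
      tauto
    -- resultant identity: Bezout combination of the two cubics
    have key : a * a1 * ((a * a1) ^ 2 - 3 * (b * b1) ^ 2 - 6 * (a * a1) * (b * b1)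
        + 4 * (a * b1 ^ 3 + a1 * b ^ 3)) = 0 := by
      linear_combination
        ((-(3/2) * a^2 * b^2 * b1 + 2 * a^3 * b1^2 - (1/2) * a^3 * a1 * b) * ζ^2
          + ((9/2) * a * b^3 * b1 - 6 * a^2 * b * b1^2 + (1/2) * a^2 * a1 * b^2
             + a^3 * a1 * b1) * ζ
          + (-(9/2) * a * b^2 * b1^2 + 3 * a * a1 * b^3 + 6 * a^2 * b1^3
             - 5 * a^2 * a1 * b * b1 + (1/2) * a^3 * a1^2)) * h1
        + (((3/2) * a^2 * b^2 * b1 - 2 * a^3 * b1^2 + (1/2) * a^3 * a1 * b) * ζ^2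
          + (-(3/2) * a * b^3 * b1 + 2 * a^2 * b * b1^2 + (1/2) * a^2 * a1 * b^2
             - a^3 * a1 * b1) * ζ
          + (-(3/2) * a * b^2 * b1^2 - a * a1 * b^3 + 2 * a^2 * b1^3
             + a^2 * a1 * b * b1 - (1/2) * a^3 * a1^2)) * h2
    have hTc : (a * a1) ^ 2 - 3 * (b * b1) ^ 2 - 6 * (a * a1) * (b * b1)
        + 4 * (a * b1 ^ 3 + a1 * b ^ 3) = 0 := by
      rcases mul_eq_zero.mp key with h | h
      · exact absurd h (mul_ne_zero hα ha1ne)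
      · exact h
    have e1 : ((‖α‖ : ℂ)) ^ 2 = a * a1 := by
      rw [show a * a1 = α * (starRingEnd ℂ) α from rfl, Complex.mul_conj]
      norm_cast
      exact Complex.sq_norm α
    have e2 : ((‖β‖ : ℂ)) ^ 2 = b * b1 := by
      rw [show b * b1 = β * (starRingEnd ℂ) β from rfl, Complex.mul_conj]
      norm_cast
      exact Complex.sq_norm β
    have hT : ((‖α‖ ^ 4 - 3 * ‖β‖ ^ 4
        - 6 * ‖α‖ ^ 2 * ‖β‖ ^ 2 : ℝ) : ℂ)
        + 4 * (a * b1 ^ 3 + a1 * b ^ 3) = 0 := by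
      push_cast
      linear_combination hTc
        + (((‖α‖ : ℂ)) ^ 2 + a * a1 - 6 * ((‖β‖ : ℂ)) ^ 2) * e1
        + (-3 * (((‖β‖ : ℂ)) ^ 2 + b * b1) - 6 * (a * a1)) * e2
    have := congrArg Complex.re hT
    simp only [Complex.add_re, Complex.ofReal_re, Complex.zero_re, Complex.mul_re,
      Complex.re_ofNat, Complex.im_ofNat, zero_mul, sub_zero] at this
    simp only [Complex.add_re, Complex.mul_re]
    linarith
end

section
/- For s, t ∈ ℝ let G_{s,t} : ℝ² → ℝ³ be G_{s,t}(x,y) = (x, y², y³ − x³y + sy + txy). Then for all s, t ∈ ℝ there is no point (x₀, y₀) with y₀ ≠ 0 such that G_{s,t}(x₀, y₀) = G_{s,t}(x₀, −y₀) and the image of the differential of G_{s,t} at (x₀, y₀) equals the image of the differential of G_{s,t} at (x₀, −y₀). In other words, the versal unfolding of the S₂ singularity has no self-tangency (bi-germ) points. -/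
/-- The versal unfolding `G_{s,t}(x,y) = (x, y², y³ − x³y + sy + txy)` of the `S₂`
singularity. -/
noncomputable def GS2 (s t : ℝ) : ℝ × ℝ → ℝ × ℝ × ℝ :=
  fun p => (p.1, p.2 ^ 2, p.2 ^ 3 - p.1 ^ 3 * p.2 + s * p.2 + t * p.1 * p.2)

/-- The derivative of `GS2 s t` at `(x, y)` as a continuous linear map. -/
noncomputable def DS2 (s t x y : ℝ) : ℝ × ℝ →L[ℝ] ℝ × ℝ × ℝ :=
  (ContinuousLinearMap.fst ℝ ℝ ℝ).prod
    (((2 * y) • ContinuousLinearMap.snd ℝ ℝ ℝ).prod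
      ((-3 * x ^ 2 * y + t * y) • ContinuousLinearMap.fst ℝ ℝ ℝ +
       (3 * y ^ 2 - x ^ 3 + s + t * x) • ContinuousLinearMap.snd ℝ ℝ ℝ))

lemma GS2_hasFDerivAt (s t x y : ℝ) :
    HasFDerivAt (GS2 s t) (DS2 s t x y) (x, y) := by
  have hfun : GS2 s t = fun p : ℝ × ℝ =>
      (p.1, p.2 * p.2, p.2 * p.2 * p.2 - p.1 * p.1 * p.1 * p.2 + s * p.2 + t * p.1 * p.2) := by
    funext p
    simp only [GS2, Prod.mk.injEq]
    exact ⟨trivial, by ring, by ring⟩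
  rw [hfun]
  have h1 : HasFDerivAt (fun p : ℝ × ℝ => p.1) (ContinuousLinearMap.fst ℝ ℝ ℝ) (x, y) :=
    hasFDerivAt_fst
  have h2 : HasFDerivAt (fun p : ℝ × ℝ => p.2) (ContinuousLinearMap.snd ℝ ℝ ℝ) (x, y) :=
    hasFDerivAt_snd
  have h3 := ((((h2.mul h2).mul h2).sub (((h1.mul h1).mul h1).mul h2)).add
      (h2.const_mul s)).add ((h1.const_mul t).mul h2)
  have h := h1.prodMk ((h2.mul h2).prodMk h3)
  refine h.congr_fderiv ?_
  refine ContinuousLinearMap.ext fun v => ?_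
  simp [DS2, ContinuousLinearMap.prod_apply]
  constructor <;> ring

/-- The versal unfolding of the `S₂` singularity has no self-tangency (bi-germ) points:
there is no point `(x₀, y₀)` with `y₀ ≠ 0` such that `G_{s,t}(x₀,y₀) = G_{s,t}(x₀,−y₀)`
and the images of the differentials at the two points coincide. -/
theorem stmt16 (s t : ℝ) (x₀ y₀ : ℝ) (hy : y₀ ≠ 0) :
    ¬ (GS2 s t (x₀, y₀) = GS2 s t (x₀, -y₀) ∧
       LinearMap.range (fderiv ℝ (GS2 s t) (x₀, y₀) : ℝ × ℝ →ₗ[ℝ] ℝ × ℝ × ℝ) =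
         LinearMap.range (fderiv ℝ (GS2 s t) (x₀, -y₀) : ℝ × ℝ →ₗ[ℝ] ℝ × ℝ × ℝ)) := by
  rintro ⟨heq, hrange⟩
  rw [(GS2_hasFDerivAt s t x₀ y₀).fderiv, (GS2_hasFDerivAt s t x₀ (-y₀)).fderiv] at hrange
  have h3 : y₀ ^ 3 - x₀ ^ 3 * y₀ + s * y₀ + t * x₀ * y₀ =
      (-y₀) ^ 3 - x₀ ^ 3 * (-y₀) + s * (-y₀) + t * x₀ * (-y₀) := by
    have := congrArg (fun q : ℝ × ℝ × ℝ => q.2.2) heq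
    simpa [GS2] using this
  have key : x₀ ^ 3 - s - t * x₀ = y₀ ^ 2 := by
    have h0 : 2 * y₀ * (y₀ ^ 2 - x₀ ^ 3 + s + t * x₀) = 0 := by nlinarith [h3]
    rcases mul_eq_zero.mp h0 with h | h
    · rcases mul_eq_zero.mp h with h | h
      · norm_num at h
      · exact absurd h hy
    · linarith
  have hmem : ((0 : ℝ), (2 * y₀ : ℝ), (2 * y₀ ^ 2 : ℝ)) ∈
      LinearMap.range (DS2 s t x₀ y₀ : ℝ × ℝ →ₗ[ℝ] ℝ × ℝ × ℝ) := by
    refine ⟨((0 : ℝ), (1 : ℝ)), ?_⟩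
    simp [DS2]
    linarith [key]
  rw [hrange] at hmem
  obtain ⟨v, hv⟩ := hmem
  simp [DS2, Prod.ext_iff] at hv
  obtain ⟨hv1, hv2, hv3⟩ := hv
  have hv2' : v.2 = -1 := by
    have h0 : (2 * y₀) * (v.2 + 1) = 0 := by linarith [hv2]
    rcases mul_eq_zero.mp h0 with h | h
    · rcases mul_eq_zero.mp h with h | h
      · norm_num at h
      · exact absurd h hy
    · linarith
  rw [hv1, hv2'] at hv3
  have hzero : y₀ ^ 2 = 0 := by nlinarith [hv3, key]
  exact hy (by nlinarith [hzero])
end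

section
/- For s, t ∈ ℝ let H_{s,t} : ℝ² → ℝ³ be H_{s,t}(x,y) = (x, y², y⁵ − x²y + sy + ty³). Let (x₀, y₀) ∈ ℝ² with y₀ ≠ 0. Then H_{s,t}(x₀, y₀) = H_{s,t}(x₀, −y₀) and the image of the differential of H_{s,t} at (x₀, y₀) equals the image of the differential of H_{s,t} at (x₀, −y₀) if and only if x₀ = 0, s = y₀⁴ and t = −2y₀². In particular, the self-tangency (bi-germ) locus of this versal unfolding of the B₂ singularity is {(s,t) = (a⁴, −2a²) : a ≠ 0}, with self-tangency occurring at the source points (0, a) and (0, −a). -/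
set_option maxHeartbeats 1000000
set_option linter.unreachableTactic false
set_option linter.unusedTactic false

/-- The versal unfolding `H_{s,t}(x,y) = (x, y², y⁵ − x²y + sy + ty³)` of the `B₂`
singularity. -/
noncomputable def HB2 (s t : ℝ) : ℝ × ℝ → ℝ × ℝ × ℝ :=
  fun p => (p.1, p.2 ^ 2, p.2 ^ 5 - p.1 ^ 2 * p.2 + s * p.2 + t * p.2 ^ 3)

/-- The total derivative of `HB2 s t` at a point `(x, y)`, where
`c = 5y⁴ − x² + s + 3ty²`. -/
noncomputable def DH (x y c : ℝ) : ℝ × ℝ →L[ℝ] ℝ × ℝ × ℝ :=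
  (ContinuousLinearMap.fst ℝ ℝ ℝ).prod
    (((2*y) • ContinuousLinearMap.snd ℝ ℝ ℝ).prod
      ((-2*x*y) • ContinuousLinearMap.fst ℝ ℝ ℝ + c • ContinuousLinearMap.snd ℝ ℝ ℝ))

lemma hasD (s t x y : ℝ) :
    HasFDerivAt (HB2 s t) (DH x y (5*y^4 - x^2 + s + 3*t*y^2)) (x, y) := by
  have hrw : HB2 s t = fun p : ℝ × ℝ =>
      (p.1, p.2*p.2, p.2*p.2*(p.2*p.2)*p.2 - p.1*p.1*p.2 + (s*p.2 + t*(p.2*p.2*p.2))) := by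
    funext p; simp only [HB2]; refine Prod.ext rfl (Prod.ext (by ring) (by ring))
  rw [hrw]
  have h1 : HasFDerivAt (fun p : ℝ × ℝ => p.1) (ContinuousLinearMap.fst ℝ ℝ ℝ) (x, y) :=
    hasFDerivAt_fst
  have hs : HasFDerivAt (fun p : ℝ × ℝ => p.2) (ContinuousLinearMap.snd ℝ ℝ ℝ) (x, y) :=
    hasFDerivAt_snd
  have h2 := hs.mul hs
  have h5 := ((h2.mul h2).mul hs)
  have h3 := (h5.sub ((h1.mul h1).mul hs)).add ((hs.const_mul s).add ((h2.mul hs).const_mul t))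
  refine (h1.prodMk (h2.prodMk h3)).congr_fderiv ?_
  refine ContinuousLinearMap.ext fun q => ?_
  refine Prod.ext ?_ (Prod.ext ?_ ?_) <;>
    simp [DH, ContinuousLinearMap.smul_apply] <;> ring

lemma mem_rangeDH (x y c : ℝ) (w : ℝ × ℝ × ℝ) :
    w ∈ LinearMap.range (DH x y c : ℝ × ℝ →ₗ[ℝ] ℝ × ℝ × ℝ) ↔
      ∃ u v : ℝ, ((u, 2*y*v, -2*x*y*u + c*v) : ℝ × ℝ × ℝ) = w := by
  constructor
  · rintro ⟨⟨u, v⟩, rfl⟩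
    refine ⟨u, v, ?_⟩
    refine Prod.ext ?_ (Prod.ext ?_ ?_) <;> simp [DH] <;> ring
  · rintro ⟨u, v, rfl⟩
    refine ⟨(u, v), ?_⟩
    refine Prod.ext ?_ (Prod.ext ?_ ?_) <;> simp [DH] <;> ring

/-- For `y₀ ≠ 0`: `H_{s,t}(x₀,y₀) = H_{s,t}(x₀,−y₀)` together with equality of the images
of the differentials at the two points holds iff `x₀ = 0`, `s = y₀⁴` and `t = −2y₀²`:
the self-tangency (bi-germ) locus of the versal unfolding of `B₂` is
`{(s,t) = (a⁴, −2a²) : a ≠ 0}`, with self-tangency at the source points `(0, ±a)`. -/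
theorem stmt18 (s t x₀ y₀ : ℝ) (hy : y₀ ≠ 0) :
    (HB2 s t (x₀, y₀) = HB2 s t (x₀, -y₀) ∧
      LinearMap.range (fderiv ℝ (HB2 s t) (x₀, y₀) : ℝ × ℝ →ₗ[ℝ] ℝ × ℝ × ℝ) =
        LinearMap.range (fderiv ℝ (HB2 s t) (x₀, -y₀) : ℝ × ℝ →ₗ[ℝ] ℝ × ℝ × ℝ)) ↔
      (x₀ = 0 ∧ s = y₀ ^ 4 ∧ t = -2 * y₀ ^ 2) := by
  have hD1 := (hasD s t x₀ y₀).fderiv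
  have hD2 : fderiv ℝ (HB2 s t) (x₀, -y₀)
      = DH x₀ (-y₀) (5*y₀^4 - x₀^2 + s + 3*t*y₀^2) := by
    rw [(hasD s t x₀ (-y₀)).fderiv]
    congr 1
    ring
  rw [hD1, hD2]
  set c := 5*y₀^4 - x₀^2 + s + 3*t*y₀^2 with hc
  constructor
  · rintro ⟨him, hran⟩
    have h3 : y₀ ^ 5 - x₀ ^ 2 * y₀ + s * y₀ + t * y₀ ^ 3
        = (-y₀) ^ 5 - x₀ ^ 2 * (-y₀) + s * (-y₀) + t * (-y₀) ^ 3 := by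
      simpa [HB2, Prod.ext_iff] using him
    have hE1 : y₀^4 - x₀^2 + s + t*y₀^2 = 0 := by
      have hmul : (y₀^4 - x₀^2 + s + t*y₀^2) * y₀ = 0 := by nlinarith [h3]
      rcases mul_eq_zero.mp hmul with h | h
      · exact h
      · exact absurd h hy
    -- x₀ = 0 from range equality
    have hv1 : ((1:ℝ), 2*y₀*0, -2*x₀*y₀*1 + c*0) ∈ LinearMap.range (DH x₀ y₀ c : ℝ × ℝ →ₗ[ℝ] ℝ × ℝ × ℝ) :=
      (mem_rangeDH _ _ _ _).mpr ⟨1, 0, rfl⟩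
    rw [hran, mem_rangeDH] at hv1
    obtain ⟨u, v, huv⟩ := hv1
    obtain ⟨e1, e2, e3⟩ : u = 1 ∧ 2*(-y₀)*v = 2*y₀*0 ∧ -2*x₀*(-y₀)*u + c*v = -2*x₀*y₀*1 + c*0 := by
      simpa [Prod.ext_iff] using huv
    have hv0 : v = 0 := by
      have : y₀ * v = 0 := by linarith
      rcases mul_eq_zero.mp this with h | h
      · exact absurd h hy
      · exact h
    have hx0 : x₀ = 0 := by
      subst e1 hv0
      have : x₀ * y₀ = 0 := by nlinarith [e3]
      rcases mul_eq_zero.mp this with h | h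
      · exact h
      · exact absurd h hy
    -- c = 0 from range equality
    have hv2 : ((0:ℝ), 2*y₀*1, -2*x₀*y₀*0 + c*1) ∈ LinearMap.range (DH x₀ y₀ c : ℝ × ℝ →ₗ[ℝ] ℝ × ℝ × ℝ) :=
      (mem_rangeDH _ _ _ _).mpr ⟨0, 1, rfl⟩
    rw [hran, mem_rangeDH] at hv2
    obtain ⟨u', v', huv'⟩ := hv2
    obtain ⟨g1, g2, g3⟩ : u' = 0 ∧ 2*(-y₀)*v' = 2*y₀*1 ∧
        -2*x₀*(-y₀)*u' + c*v' = -2*x₀*y₀*0 + c*1 := by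
      simpa [Prod.ext_iff] using huv'
    have hv'1 : v' = -1 := by
      have : y₀ * (v' + 1) = 0 := by linarith
      rcases mul_eq_zero.mp this with h | h
      · exact absurd h hy
      · linarith
    have hc0 : c = 0 := by subst g1 hv'1; linarith
    have hy2 : y₀^2 ≠ 0 := pow_ne_zero 2 hy
    have hcc : 5*y₀^4 - x₀^2 + s + 3*t*y₀^2 = 0 := by rw [← hc]; exact hc0
    have ht : t = -2*y₀^2 := by
      have h4 : (t + 2*y₀^2) * y₀^2 = 0 := by nlinarith [hE1, hcc, hx0]
      rcases mul_eq_zero.mp h4 with h | h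
      · linarith
      · exact absurd h hy2
    refine ⟨hx0, ?_, ht⟩
    nlinarith [hE1, ht, hx0]
  · rintro ⟨rfl, rfl, rfl⟩
    constructor
    · simp only [HB2]
      refine Prod.ext rfl (Prod.ext (by ring) (by ring))
    · have hc0 : c = 0 := by rw [hc]; ring
      rw [hc0]
      ext w
      rw [mem_rangeDH, mem_rangeDH]
      constructor
      · rintro ⟨u, v, rfl⟩
        exact ⟨u, -v, Prod.ext rfl (Prod.ext (by ring) (by ring))⟩
      · rintro ⟨u, v, rfl⟩
        exact ⟨u, -v, Prod.ext rfl (Prod.ext (by ring) (by ring))⟩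
end
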